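/- Residual identity for the entropy-regularized backup of the averaged value function: In the dynamic-KL scheme with evaluation step q_{k+1} = T^{1/η_k,0}_{π_{k+1}|π_k} q_k + ε_{k+1} for given ε_{k+1} ∈ ℝ^{S×A}, define E_k = −Σ_{j=1}^k η_j ε_j and X_k = Σ_{j=0}^k (η_{j+1} − η_j) T^{1/η_j,0}_{π_{j+1}|π_j} q_j. Then for every k ≥ 1: T^{0,1/Z_k}_{π_{k+1}} h_k − h_k = (1/Z_k) ( η_{k+1} q_{k+1} − η_0 q_0 + E_{k+1} − X_k + γ P H(π_0) ). -/

import Mathlib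

open Finset

noncomputable section

/-- A transition kernel on a finite MDP: `P s a s'` is the probability of moving to `s'`
from `s` after action `a`. -/
def IsKernel {S A : Type*} [Fintype S] (P : S → A → S → ℝ) : Prop :=
  (∀ s a s', 0 ≤ P s a s') ∧ ∀ s a, ∑ s', P s a s' = 1

/-- A policy: `π s a` is the probability of action `a` in state `s`. -/
def IsPolicy {S A : Type*} [Fintype A] (π : S → A → ℝ) : Prop :=
  (∀ s a, 0 ≤ π s a) ∧ ∀ s, ∑ a, π s a = 1

/-- `(P v)(s,a) = ∑_{s'} P(s'|s,a) v(s')`. -/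
def kerApp {S A : Type*} [Fintype S] (P : S → A → S → ℝ) (v : S → ℝ) : S → A → ℝ :=
  fun s a => ∑ s', P s a s' * v s'

/-- `⟨f₁,f₂⟩(s) = ∑_a f₁(s,a) f₂(s,a)`. -/
def dotSA {S A : Type*} [Fintype A] (f₁ f₂ : S → A → ℝ) : S → ℝ :=
  fun s => ∑ a, f₁ s a * f₂ s a

/-- The policy-induced transition operator `P_π q = P ⟨π, q⟩` on `ℝ^{S×A}`. -/
def Ppi {S A : Type*} [Fintype S] [Fintype A] (P : S → A → S → ℝ) (π : S → A → ℝ)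
    (q : S → A → ℝ) : S → A → ℝ :=
  kerApp P (dotSA π q)

/-- The Bellman evaluation operator `T_π q = r + γ P_π q`. -/
def bellman {S A : Type*} [Fintype S] [Fintype A] (P : S → A → S → ℝ) (r : S → A → ℝ)
    (γ : ℝ) (π : S → A → ℝ) (q : S → A → ℝ) : S → A → ℝ :=
  fun s a => r s a + γ * Ppi P π q s a

/-- The Shannon entropy of a policy, `H(π)(s) = -∑_a π(a|s) ln π(a|s)` (with `0 ln 0 = 0`). -/
def entPol {S A : Type*} [Fintype A] (π : S → A → ℝ) : S → ℝ :=
  fun s => -∑ a, π s a * Real.log (π s a)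

/-- The KL divergence between policies,
`KL(π₁‖π₂)(s) = ∑_a π₁(a|s)(ln π₁(a|s) - ln π₂(a|s))`. -/
def klPol {S A : Type*} [Fintype A] (π₁ π₂ : S → A → ℝ) : S → ℝ :=
  fun s => ∑ a, π₁ s a * (Real.log (π₁ s a) - Real.log (π₂ s a))

/-- The KL-regularized Bellman operator `T^{λ,0}_{π|μ} q = r + γ P(⟨π,q⟩ - λ KL(π‖μ))`. -/
def TKL {S A : Type*} [Fintype S] [Fintype A] (P : S → A → S → ℝ) (r : S → A → ℝ)
    (γ lam : ℝ) (π μ : S → A → ℝ) (q : S → A → ℝ) : S → A → ℝ :=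
  fun s a => r s a + γ * kerApp P (fun s' => dotSA π q s' - lam * klPol π μ s') s a

/-- The entropy-regularized Bellman operator `T^{0,τ}_π q = r + γ P(⟨π,q⟩ + τ H(π))`. -/
def TH {S A : Type*} [Fintype S] [Fintype A] (P : S → A → S → ℝ) (r : S → A → ℝ)
    (γ tau : ℝ) (π : S → A → ℝ) (q : S → A → ℝ) : S → A → ℝ :=
  fun s a => r s a + γ * kerApp P (fun s' => dotSA π q s' + tau * entPol π s') s a

/-!
The policies of the scheme are the Gibbs policies `π n = softmax (W n)` of the cumulative scores
`W n = ∑_{j<n} η_j q_j`: `W 0 = 0` gives the uniform `π 0`, and `W (k+1) = Z_k h_k`. For Gibbs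
policies, `η_j ⟨π_{j+1}, q_j⟩ - KL(π_{j+1} ‖ π_j)` is the increment of the log-partition function
`log ∑_a exp (W j a)`, so the weighted backups `∑_{j≤k} η_j T_j q_j` telescope to
`Z_k r + γ P (log-partition of W (k+1) - log |A|)`. The same value is `Z_k T^{0,1/Z_k} h_k - γ P H(π 0)`,
since `Z_k ⟨π_{k+1}, h_k⟩ + H(π_{k+1})` is that log-partition and `H(π 0) = log |A|`. On the other
hand the evaluation step gives `η_j T_j q_j = η_{j+1} (q_{j+1} - ε_{j+1}) - (η_{j+1} - η_j) T_j q_j`,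
which sums to `Z_k h_k + η_{k+1} q_{k+1} - η_0 q_0 + E_{k+1} - X_k`.
-/

section Softmax

variable {A : Type*} [Fintype A]

def softmax (x : A → ℝ) (a : A) : ℝ :=
  Real.exp (x a) / ∑ b, Real.exp (x b)

def logSumExp (x : A → ℝ) : ℝ :=
  Real.log (∑ b, Real.exp (x b))

variable [Nonempty A]

lemma sum_exp_pos (x : A → ℝ) : 0 < ∑ b, Real.exp (x b) :=
  sum_pos (fun _ _ => Real.exp_pos _) univ_nonempty

lemma sum_softmax (x : A → ℝ) : ∑ a, softmax x a = 1 := by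
  simp only [softmax, ← sum_div]
  exact div_self (sum_exp_pos x).ne'

lemma log_softmax (x : A → ℝ) (a : A) : Real.log (softmax x a) = x a - logSumExp x := by
  rw [softmax, Real.log_div (Real.exp_ne_zero _) (sum_exp_pos x).ne', Real.log_exp, logSumExp]

end Softmax

section SoftmaxPolicy

variable {S A : Type*} [Fintype A]

def softmaxPolicy (x : S → A → ℝ) : S → A → ℝ :=
  fun s => softmax (x s)

variable [Nonempty A]

lemma klPol_softmaxPolicy (x y : S → A → ℝ) (s : S) :
    klPol (softmaxPolicy x) (softmaxPolicy y) s
      = dotSA (softmaxPolicy x) (fun s a => x s a - y s a) s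
        - (logSumExp (x s) - logSumExp (y s)) := by
  have hsum := sum_softmax (x s)
  simp only [klPol, dotSA, softmaxPolicy, log_softmax] at hsum ⊢
  simp only [mul_sub, sum_sub_distrib, ← sum_mul, hsum]
  ring

lemma entPol_softmaxPolicy (x : S → A → ℝ) (s : S) :
    entPol (softmaxPolicy x) s = logSumExp (x s) - dotSA (softmaxPolicy x) x s := by
  have hsum := sum_softmax (x s)
  simp only [entPol, dotSA, softmaxPolicy, log_softmax] at hsum ⊢
  simp only [mul_sub, sum_sub_distrib, ← sum_mul, hsum]
  ring

lemma sum_range_mul_dotSA_sub_klPol (W : ℕ → S → A → ℝ) (η : ℕ → ℝ) (q : ℕ → S → A → ℝ)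
    (hW : ∀ j s a, W (j + 1) s a - W j s a = η j * q j s a) (n : ℕ) (s : S) :
    ∑ j ∈ range n, (η j * dotSA (softmaxPolicy (W (j + 1))) (q j) s
        - klPol (softmaxPolicy (W (j + 1))) (softmaxPolicy (W j)) s)
      = logSumExp (W n s) - logSumExp (W 0 s) := by
  rw [← sum_range_sub (fun j => logSumExp (W j s))]
  refine sum_congr rfl fun j _ => ?_
  simp only [klPol_softmaxPolicy, hW, dotSA, mul_sum]
  ring_nf

end SoftmaxPolicy

section Kernel

variable {S A : Type*} [Fintype S] (P : S → A → S → ℝ)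

lemma mul_kerApp (c : ℝ) (v : S → ℝ) (s : S) (a : A) :
    c * kerApp P v s a = kerApp P (fun s' => c * v s') s a := by
  simp only [kerApp, mul_sum]
  exact sum_congr rfl fun _ _ => by ring

lemma sum_kerApp {ι : Type*} (t : Finset ι) (v : ι → S → ℝ) (s : S) (a : A) :
    ∑ j ∈ t, kerApp P (v j) s a = kerApp P (fun s' => ∑ j ∈ t, v j s') s a := by
  simp only [kerApp, mul_sum]
  exact sum_comm

lemma kerApp_sub (v w : S → ℝ) (s : S) (a : A) :
    kerApp P (fun s' => v s' - w s') s a = kerApp P v s a - kerApp P w s a := by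
  simp only [kerApp, mul_sub, sum_sub_distrib]

end Kernel

section Bellman

variable {S A : Type*} [Fintype S] [Fintype A] (P : S → A → S → ℝ) (r : S → A → ℝ) (γ : ℝ)

lemma mul_TKL_one_div {c : ℝ} (hc : c ≠ 0) (p μ q : S → A → ℝ) (s : S) (a : A) :
    c * TKL P r γ (1 / c) p μ q s a
      = c * r s a + γ * kerApp P (fun s' => c * dotSA p q s' - klPol p μ s') s a := by
  rw [TKL, mul_add, mul_left_comm, mul_kerApp]
  congr 3
  ext s'
  field_simp

lemma mul_TH_one_div {c : ℝ} (hc : c ≠ 0) (p q : S → A → ℝ) (s : S) (a : A) :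
    c * TH P r γ (1 / c) p q s a
      = c * r s a + γ * kerApp P (fun s' => c * dotSA p q s' + entPol p s') s a := by
  rw [TH, mul_add, mul_left_comm, mul_kerApp]
  congr 3
  ext s'
  field_simp

variable [Nonempty A]

lemma sum_range_mul_TKL_softmaxPolicy (W : ℕ → S → A → ℝ) (η : ℕ → ℝ) (q : ℕ → S → A → ℝ)
    (hη : ∀ j, η j ≠ 0) (hW : ∀ j s a, W (j + 1) s a - W j s a = η j * q j s a)
    (n : ℕ) (s : S) (a : A) :
    ∑ j ∈ range n,
        η j * TKL P r γ (1 / η j) (softmaxPolicy (W (j + 1))) (softmaxPolicy (W j)) (q j) s a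
      = (∑ j ∈ range n, η j) * r s a
        + γ * (kerApp P (fun s' => logSumExp (W n s')) s a
          - kerApp P (fun s' => logSumExp (W 0 s')) s a) := by
  simp only [mul_TKL_one_div P r γ (hη _), sum_add_distrib, ← sum_mul, ← mul_sum]
  rw [sum_kerApp, ← kerApp_sub]
  simp only [sum_range_mul_dotSA_sub_klPol W η q hW]

lemma mul_TH_softmaxPolicy {c : ℝ} (hc : c ≠ 0) (x h : S → A → ℝ)
    (hx : ∀ s a, x s a = c * h s a) (s : S) (a : A) :
    c * TH P r γ (1 / c) (softmaxPolicy x) h s a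
      = c * r s a + γ * kerApp P (fun s' => logSumExp (x s')) s a := by
  rw [mul_TH_one_div P r γ hc]
  congr 3
  ext s'
  rw [entPol_softmaxPolicy]
  simp only [dotSA, hx, mul_sum]
  ring_nf

end Bellman

lemma sum_range_mul_eq_of_succ_eq_add (η T q ε : ℕ → ℝ) (hq : ∀ j, q (j + 1) = T j + ε (j + 1))
    (n : ℕ) :
    ∑ j ∈ range n, η j * T j
      = ∑ j ∈ range (n + 1), η j * q j - η 0 * q 0 - ∑ j ∈ Icc 1 n, η j * ε j
        - ∑ j ∈ range n, (η (j + 1) - η j) * T j := by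
  rw [sum_range_succ', ← Ico_add_one_right_eq_Icc, sum_Ico_eq_sum_range, add_sub_cancel_right,
    add_tsub_cancel_right, ← sum_sub_distrib, ← sum_sub_distrib]
  exact sum_congr rfl fun j _ => by rw [add_comm 1 j, hq]; ring

theorem entropy_backup_residual_identity_general
    {S A : Type*} [Fintype S] [Fintype A]
    (P : S → A → S → ℝ)
    (r : S → A → ℝ) (γ : ℝ)
    (η : ℕ → ℝ) (hη : ∀ k, 0 < η k)
    (Z : ℕ → ℝ) (hZ : ∀ k, Z k = ∑ j ∈ Finset.range (k + 1), η j)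
    (q ε : ℕ → S → A → ℝ)
    (h : ℕ → S → A → ℝ)
    (hh : ∀ k s a, h k s a = (1 / Z k) * ∑ j ∈ Finset.range (k + 1), η j * q j s a)
    (π : ℕ → S → A → ℝ)
    (hπ0 : ∀ s a, π 0 s a = 1 / (Fintype.card A : ℝ))
    (hπ : ∀ k s a, π (k + 1) s a =
      Real.exp (Z k * h k s a) / ∑ b, Real.exp (Z k * h k s b))
    (hq : ∀ k s a, q (k + 1) s a =
      TKL P r γ (1 / η k) (π (k + 1)) (π k) (q k) s a + ε (k + 1) s a)
    (E : ℕ → S → A → ℝ)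
    (hE : ∀ k s a, E k s a = -∑ j ∈ Finset.Icc 1 k, η j * ε j s a)
    (X : ℕ → S → A → ℝ)
    (hX : ∀ k s a, X k s a = ∑ j ∈ Finset.range (k + 1),
      (η (j + 1) - η j) * TKL P r γ (1 / η j) (π (j + 1)) (π j) (q j) s a) :
    ∀ k, 1 ≤ k → ∀ s a,
      TH P r γ (1 / Z k) (π (k + 1)) (h k) s a - h k s a =
        (1 / Z k) *
          (η (k + 1) * q (k + 1) s a - η 0 * q 0 s a + E (k + 1) s a - X k s a
            + γ * kerApp P (entPol (π 0)) s a) := by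
  intro k _ s a
  have : Nonempty A := ⟨a⟩
  have hZ_ne : ∀ n, Z n ≠ 0 := fun n =>
    (hZ n ▸ sum_pos (fun j _ => hη j) nonempty_range_add_one).ne'
  set W : ℕ → S → A → ℝ := fun n s a => ∑ j ∈ range n, η j * q j s a
  have hW_succ : ∀ n s a, W (n + 1) s a = Z n * h n s a := fun n s a => by
    rw [hh, one_div, mul_inv_cancel_left₀ (hZ_ne n)]
  have hπW : ∀ n, π n = softmaxPolicy (W n) := by
    rintro (_ | n) <;> ext s a
    · simp [hπ0, softmaxPolicy, softmax, W]
    · simp only [hπ, hW_succ, softmaxPolicy, softmax]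
  have hH0 : ∀ s, entPol (π 0) s = logSumExp (W 0 s) := fun s => by
    simp [hπW, entPol_softmaxPolicy, dotSA, W]
  have backup := sum_range_mul_TKL_softmaxPolicy P r γ W η q (fun j => (hη j).ne')
    (fun j s a => by simp only [W, sum_range_succ, add_sub_cancel_left]) (k + 1) s a
  have value := mul_TH_softmaxPolicy P r γ (hZ_ne k) (W (k + 1)) (h k) (hW_succ k) s a
  have evaluation := sum_range_mul_eq_of_succ_eq_add η
    (fun j => TKL P r γ (1 / η j) (π (j + 1)) (π j) (q j) s a) (fun j => q j s a)
    (fun j => ε j s a) (fun j => hq j s a) (k + 1)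
  simp only [← hπW, ← hZ, ← hX] at backup value evaluation
  rw [sum_range_succ _ (k + 1)] at evaluation
  rw [eq_comm, one_div_mul_eq_div, div_eq_iff (hZ_ne k), hE, funext hH0]
  linear_combination backup - evaluation - value - hW_succ k s a

/-- residual identity for the entropy-regularized backup of the averaged
value function `h_k` in the dynamic-KL scheme. -/
theorem entropy_backup_residual_identity
    {S A : Type*} [Fintype S] [Fintype A] [Nonempty S] [Nonempty A]
    (P : S → A → S → ℝ) (hP : IsKernel P)
    (r : S → A → ℝ) (γ : ℝ) (hγ0 : 0 < γ) (hγ1 : γ < 1)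
    (η : ℕ → ℝ) (hη : ∀ k, 0 < η k)
    (Z : ℕ → ℝ) (hZ : ∀ k, Z k = ∑ j ∈ Finset.range (k + 1), η j)
    (q ε : ℕ → S → A → ℝ)
    (h : ℕ → S → A → ℝ)
    (hh : ∀ k s a, h k s a = (1 / Z k) * ∑ j ∈ Finset.range (k + 1), η j * q j s a)
    (π : ℕ → S → A → ℝ)
    (hπ0 : ∀ s a, π 0 s a = 1 / (Fintype.card A : ℝ))
    (hπ : ∀ k s a, π (k + 1) s a =
      Real.exp (Z k * h k s a) / ∑ b, Real.exp (Z k * h k s b))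
    (hq : ∀ k s a, q (k + 1) s a =
      TKL P r γ (1 / η k) (π (k + 1)) (π k) (q k) s a + ε (k + 1) s a)
    (E : ℕ → S → A → ℝ)
    (hE : ∀ k s a, E k s a = -∑ j ∈ Finset.Icc 1 k, η j * ε j s a)
    (X : ℕ → S → A → ℝ)
    (hX : ∀ k s a, X k s a = ∑ j ∈ Finset.range (k + 1),
      (η (j + 1) - η j) * TKL P r γ (1 / η j) (π (j + 1)) (π j) (q j) s a) :
    ∀ k, 1 ≤ k → ∀ s a,
      TH P r γ (1 / Z k) (π (k + 1)) (h k) s a - h k s a =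
        (1 / Z k) *
          (η (k + 1) * q (k + 1) s a - η 0 * q 0 s a + E (k + 1) s a - X k s a
            + γ * kerApp P (entPol (π 0)) s a) :=
  entropy_backup_residual_identity_general P r γ η hη Z hZ q ε h hh π hπ0 hπ hq E hE X hX
end
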